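/- Let D be a discrete regular distribution (virtual values non-decreasing) with reserve price r. Then for every v in the support of D with v < r, the virtual value satisfies φ(v) < 0. -/

import Mathlib

open Finset

/-- Survival function `S(z_i) = Pr[V ≥ z_i]` of a discrete distribution with
support indexed by `Fin k` and mass function `f`. -/
noncomputable def surv {k : ℕ} (f : Fin k → ℝ) (i : Fin k) : ℝ :=
  ∑ j ∈ Finset.univ.filter (fun j => i ≤ j), f j

/-- Myerson virtual value of a discrete distribution with support `z` and mass `f`. -/
noncomputable def vv {k : ℕ} (z f : Fin k → ℝ) (i : Fin k) : ℝ :=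
  if h : i.1 + 1 < k then
    z i - (z ⟨i.1 + 1, h⟩ - z i) * surv f ⟨i.1 + 1, h⟩ / f i
  else z i

/-!
Write `R(p) = p · S(p)` for the revenue of posting price `p`. Unfolding `S(z_ℓ) = f(z_ℓ) + S(z_{ℓ+1})`
gives `f(z_ℓ) · φ(z_ℓ) = R(z_ℓ) - R(z_{ℓ+1})`, so `R` is non-increasing wherever `φ ≥ 0`.
If `φ(v) ≥ 0` for some `v < r`, regularity keeps `φ ≥ 0` from `v` on, whence `R(v) ≥ R(r)`:
then `v` also maximizes revenue, contradicting the minimality of `r`.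
-/

lemma surv_eq_add_surv_succ {k : ℕ} (f : Fin k → ℝ) (i : Fin k) (h : i.1 + 1 < k) :
    surv f i = f i + surv f ⟨i.1 + 1, h⟩ := by
  have hIoi : Ioi i = Ici (⟨i.1 + 1, h⟩ : Fin k) := by
    ext j
    simp only [mem_Ioi, mem_Ici, Fin.lt_def, Fin.le_def]
    omega
  simp only [surv, filter_le_eq_Ici, ← hIoi, add_sum_Ioi_eq_sum_Ici]

lemma mul_vv_eq_sub {k : ℕ} (z f : Fin k → ℝ) (i : Fin k) (h : i.1 + 1 < k) (hf : f i ≠ 0) :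
    f i * vv z f i = z i * surv f i - z ⟨i.1 + 1, h⟩ * surv f ⟨i.1 + 1, h⟩ := by
  rw [vv, dif_pos h, surv_eq_add_surv_succ f i h]
  field_simp
  ring

lemma revenue_le_of_vv_nonneg {k : ℕ} {z f : Fin k → ℝ} (hf : ∀ j, 0 < f j) {i r : Fin k}
    (hir : i ≤ r) (hφ : ∀ j, i ≤ j → 0 ≤ vv z f j) :
    z r * surv f r ≤ z i * surv f i := by
  obtain ⟨n, hn⟩ := Nat.exists_eq_add_of_le (Fin.le_def.mp hir)
  induction n generalizing i with
  | zero => rw [Fin.ext hn]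
  | succ n ih =>
    have hlt : i.1 + 1 < k := by omega
    have hii' : i ≤ ⟨i.1 + 1, hlt⟩ := Fin.le_def.mpr (Nat.le_succ _)
    have hstep := mul_vv_eq_sub z f i hlt (hf i).ne'
    calc z r * surv f r ≤ z ⟨i.1 + 1, hlt⟩ * surv f ⟨i.1 + 1, hlt⟩ :=
          ih (Fin.le_def.mpr (by simp only; omega)) (fun j hj => hφ j (hii'.trans hj))
            (by simp only; omega)
      _ ≤ z i * surv f i := by linarith [mul_nonneg (hf i).le (hφ i le_rfl)]

theorem stmt1_general (k : ℕ) (z f : Fin k → ℝ)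
    (hz : StrictMono z)
    (hf : ∀ i, 0 < f i)
    (hreg : Monotone (vv z f))
    (r : Fin k)
    (hrmax : ∀ i, z i * surv f i ≤ z r * surv f r)
    (hrmin : ∀ i, z i * surv f i = z r * surv f r → r ≤ i) :
    ∀ i : Fin k, z i < z r → vv z f i < 0 := by
  intro i hir
  have hilt : i < r := hz.lt_iff_lt.mp hir
  by_contra! hφ
  have hrev : z r * surv f r ≤ z i * surv f i :=
    revenue_le_of_vv_nonneg hf hilt.le fun j hj => hφ.trans (hreg hj)
  exact hilt.not_ge (hrmin i (le_antisymm (hrmax i) hrev))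

/-- For a discrete regular distribution (non-decreasing virtual values) with
reserve price `r` (smallest support point maximizing `r·S(r)`), every support
value `v < r` has strictly negative virtual value. -/
theorem stmt1 (k : ℕ) (hk : 0 < k) (z f : Fin k → ℝ)
    (hz : StrictMono z) (hzpos : ∀ i, 0 < z i)
    (hf : ∀ i, 0 < f i) (hsum : ∑ i, f i = 1)
    (hreg : Monotone (vv z f))
    (r : Fin k)
    (hrmax : ∀ i, z i * surv f i ≤ z r * surv f r)
    (hrmin : ∀ i, z i * surv f i = z r * surv f r → r ≤ i) :
    ∀ i : Fin k, z i < z r → vv z f i < 0 :=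
  stmt1_general k z f hz hf hreg r hrmax hrmin
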